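/- arXiv:2605.19052 — 2 statements merged into one kernel-verified Lean document; each statement's English description precedes it below -/
import Mathlib

section
/- Fix μ > 0, σ > 0, ε ∈ (0,1/2), and let c take value μ with probability (1+ε)/2 and μ+σ with probability (1−ε)/2 (the biased-down case). Let J(π) = E[min(π/2, c − π/2)]. Then J is maximized uniquely at π = μ, and J(μ) − J(π) ≥ (ε/2)|μ − π| for all π ≥ 0. -/
/-- biased-down case: with `c = μ` w.p. `(1+ε)/2` and `c = μ+σ` w.p.
`(1−ε)/2`, `J(π) = E[min(π/2, c − π/2)]` is maximized uniquely at `π = μ`, with the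
sharpness inequality `J(μ) − J(π) ≥ (ε/2)|μ − π|` for all `π ≥ 0`. -/
theorem tent_biased_down_unique_max_and_sharpness
    (μ σ ε : ℝ) (hμ : 0 < μ) (hσ : 0 < σ) (hε : ε ∈ Set.Ioo (0 : ℝ) (1 / 2))
    (J : ℝ → ℝ)
    (hJ : ∀ π : ℝ, J π =
      (1 + ε) / 2 * min (π / 2) (μ - π / 2)
        + (1 - ε) / 2 * min (π / 2) (μ + σ - π / 2)) :
    (∀ π : ℝ, 0 ≤ π → π ≠ μ → J π < J μ) ∧
    (∀ π : ℝ, 0 ≤ π → J μ - J π ≥ ε / 2 * |μ - π|) := by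
  obtain ⟨hε0, hε1⟩ := hε
  have hJμ : J μ = μ / 2 := by
    rw [hJ]
    rw [min_eq_left (by linarith), min_eq_left (by linarith)]
    ring
  have key : ∀ π : ℝ, 0 ≤ π → J μ - J π ≥ ε / 2 * |μ - π| := by
    intro π hπ
    rw [hJμ, hJ]
    rcases le_total π μ with h1 | h1
    · rw [min_eq_left (by linarith), min_eq_left (by linarith),
        abs_of_nonneg (by linarith)]
      nlinarith
    · rw [min_eq_right (by linarith), abs_of_nonpos (by linarith)]
      rcases le_total π (μ + σ) with h2 | h2
      · rw [min_eq_left (by linarith)]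
        nlinarith
      · rw [min_eq_right (by linarith)]
        nlinarith
  refine ⟨fun π hπ hne => ?_, key⟩
  have := key π hπ
  have habs : 0 < |μ - π| := abs_pos.mpr (by intro h; exact hne (by linarith))
  nlinarith
end

section
/- Fix s ≥ 1, μ > 0, σ > 0, ε ∈ (0,1/2), and v ∈ {0,1}^s. Let c ∈ ℝ^s be a random vector with independent coordinates where c_k = μ+σ with probability (1+ε)/2 if v_k = 1 and with probability (1−ε)/2 if v_k = 0 (otherwise c_k = μ). Define U(π) = E[Σ_{k=1}^s min(π_k/2, c_k − π_k/2)] for π ∈ ℝ_{+}^s. Then U is maximized uniquely at π* = μ·1 + σ·v, and for any π ∈ ℝ_{+}^s, U(π*) − U(π) ≥ (ε/2)‖π* − π‖₁. -/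
set_option maxHeartbeats 1000000 in
private lemma onedim_true (μ σ ε x : ℝ) (hμ : 0 < μ) (hσ : 0 < σ)
    (hε1 : 0 < ε) (hε2 : ε < 1/2) (hx : 0 ≤ x) :
    ((1 + ε) / 2 * min (x / 2) (μ + σ - x / 2)
      + (1 - ε) / 2 * min (x / 2) (μ - x / 2)) + ε / 2 * |μ + σ - x|
    ≤ (1 + ε) / 2 * min ((μ + σ) / 2) (μ + σ - (μ + σ) / 2)
      + (1 - ε) / 2 * min ((μ + σ) / 2) (μ - (μ + σ) / 2) := by
  have r1 : min ((μ+σ)/2) (μ + σ - (μ+σ)/2) = (μ+σ)/2 := by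
    rw [min_eq_left]; linarith
  have r2 : min ((μ+σ)/2) (μ - (μ+σ)/2) = μ - (μ+σ)/2 := by
    rw [min_eq_right]; linarith
  rw [r1, r2]
  rcases min_cases (x/2) (μ + σ - x/2) with ⟨e1, h1⟩ | ⟨e1, h1⟩ <;>
  rcases min_cases (x/2) (μ - x/2) with ⟨e2, h2⟩ | ⟨e2, h2⟩ <;>
  rcases abs_cases (μ + σ - x) with ⟨e5, h5⟩ | ⟨e5, h5⟩ <;>
  rw [e1, e2, e5] <;>
  nlinarith [mul_nonneg hε1.le hx, mul_nonneg hε1.le hσ.le, mul_nonneg hε1.le hμ.le,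
    mul_nonneg hε1.le (le_of_lt hσ)]

set_option maxHeartbeats 1000000 in
private lemma onedim_false (μ σ ε x : ℝ) (hμ : 0 < μ) (hσ : 0 < σ)
    (hε1 : 0 < ε) (hε2 : ε < 1/2) (hx : 0 ≤ x) :
    ((1 - ε) / 2 * min (x / 2) (μ + σ - x / 2)
      + (1 + ε) / 2 * min (x / 2) (μ - x / 2)) + ε / 2 * |μ - x|
    ≤ ((1 - ε) / 2 * min (μ / 2) (μ + σ - μ / 2)
      + (1 + ε) / 2 * min (μ / 2) (μ - μ / 2)) := by
  have r1 : min (μ/2) (μ + σ - μ/2) = μ/2 := by rw [min_eq_left]; linarith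
  have r2 : min (μ/2) (μ - μ/2) = μ/2 := by rw [min_eq_left]; linarith
  rw [r1, r2]
  rcases min_cases (x/2) (μ + σ - x/2) with ⟨e1, h1⟩ | ⟨e1, h1⟩ <;>
  rcases min_cases (x/2) (μ - x/2) with ⟨e2, h2⟩ | ⟨e2, h2⟩ <;>
  rcases abs_cases (μ - x) with ⟨e5, h5⟩ | ⟨e5, h5⟩ <;>
  rw [e1, e2, e5] <;>
  nlinarith [mul_nonneg hε1.le hx, mul_nonneg hε1.le hσ.le, mul_nonneg hε1.le hμ.le]

/-- multi-dimensional expected Lagrangian dual objective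
`U(π) = Σ_k J_k(π_k)`, where coordinate `k` is biased up (toward `μ+σ`) if
`v_k = 1` and biased down (toward `μ`) if `v_k = 0`. Then `U` is maximized
uniquely over `ℝ₊^s` at `π* = μ·1 + σ·v`, with ℓ₁-sharpness
`U(π*) − U(π) ≥ (ε/2)‖π* − π‖₁`. -/
theorem multi_dim_sharpness
    (s : ℕ) (hs : 1 ≤ s)
    (μ σ ε : ℝ) (hμ : 0 < μ) (hσ : 0 < σ) (hε : ε ∈ Set.Ioo (0 : ℝ) (1 / 2))
    (v : Fin s → Bool)
    (U : (Fin s → ℝ) → ℝ)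
    (hU : ∀ π : Fin s → ℝ, U π = ∑ k,
      (if v k then
        (1 + ε) / 2 * min (π k / 2) (μ + σ - π k / 2)
          + (1 - ε) / 2 * min (π k / 2) (μ - π k / 2)
      else
        (1 - ε) / 2 * min (π k / 2) (μ + σ - π k / 2)
          + (1 + ε) / 2 * min (π k / 2) (μ - π k / 2)))
    (πstar : Fin s → ℝ)
    (hπstar : πstar = fun k => μ + σ * (if v k then 1 else 0)) :
    (∀ π : Fin s → ℝ, (∀ k, 0 ≤ π k) → π ≠ πstar → U π < U πstar) ∧
    (∀ π : Fin s → ℝ, (∀ k, 0 ≤ π k) →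
      U πstar - U π ≥ ε / 2 * ∑ k, |πstar k - π k|) := by
  obtain ⟨hε1, hε2⟩ := hε
  have key : ∀ π : Fin s → ℝ, (∀ k, 0 ≤ π k) →
      U πstar - U π ≥ ε / 2 * ∑ k, |πstar k - π k| := by
    intro π hπ
    rw [hU, hU, Finset.mul_sum, ← Finset.sum_sub_distrib]
    apply Finset.sum_le_sum
    intro k _
    have hpk : πstar k = μ + σ * (if v k then 1 else 0) := by rw [hπstar]
    cases hv : v k with
    | true =>
      simp only [hv, if_true, mul_one] at hpk ⊢
      rw [hpk]
      have := onedim_true μ σ ε (π k) hμ hσ hε1 hε2 (hπ k)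
      linarith
    | false =>
      simp only [hv, Bool.false_eq_true, if_false, mul_zero, add_zero] at hpk ⊢
      rw [hpk]
      have := onedim_false μ σ ε (π k) hμ hσ hε1 hε2 (hπ k)
      linarith
  refine ⟨?_, key⟩
  intro π hπ hne
  have hk2 := key π hπ
  have hsum : 0 < ∑ k, |πstar k - π k| := by
    have : ∃ k, π k ≠ πstar k := by
      by_contra h
      push_neg at h
      exact hne (funext h)
    obtain ⟨k, hk⟩ := this
    have h1 : 0 < |πstar k - π k| := abs_pos.mpr (sub_ne_zero.mpr (Ne.symm hk))
    refine Finset.sum_pos' (fun i _ => abs_nonneg _) ⟨k, Finset.mem_univ k, h1⟩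
  nlinarith
end
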